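/- Let ħ > 0, m₁, m₂, d₁, d₂ > 0 with m₁ d₁² = m₂ d₂² (equivalently d₂ = d₁ √(m₁/m₂)), and let v₁, v₂ ∈ ℝ. Let Ψ(r,t; m,v,d) denote the free Gaussian wave packet. Then the two-particle product wave function factorizes in center-of-mass and relative coordinates for all times: there exist functions Φ, φ : ℝ × ℝ → ℂ such that for all x₁, x₂, t ∈ ℝ, Ψ(x₁,t; m₁,v₁,d₁) · Ψ(x₂,t; m₂,v₂,d₂) = Φ((m₁x₁ + m₂x₂)/(m₁+m₂), t) · φ(x₁ − x₂, t). -/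
import Mathlib
set_option maxHeartbeats 2000000


noncomputable section

/-- The free Gaussian wave packet `Ψ(r,t; m,v,d)` with reduced Planck constant `hbar`;
the square root is the principal branch. -/
noncomputable def gaussPacket (hbar m v d : ℝ) (r t : ℝ) : ℂ :=
  (((2 / Real.pi) ^ ((1 : ℝ) / 4) : ℝ) : ℂ) *
    (((d * m : ℝ) : ℂ) / ((2 * d ^ 2 * m : ℝ) + Complex.I * t * hbar)) ^ ((1 : ℂ) / 2) *
    Complex.exp ((-(d ^ 2 * m ^ 2 * (r - t * v) ^ 2) /
      (4 * d ^ 4 * m ^ 2 + t ^ 2 * hbar ^ 2) : ℝ) : ℂ) *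
    Complex.exp (Complex.I *
      (((m * t * r ^ 2 * hbar ^ 2 - 4 * d ^ 4 * m ^ 3 * v * (t * v - 2 * r)) /
        (8 * d ^ 4 * m ^ 2 * hbar + 2 * t ^ 2 * hbar ^ 3) : ℝ) : ℂ))

/-- exponent of the packet -/
noncomputable def gExp (hbar m v d : ℝ) (r t : ℝ) : ℂ :=
  ((-(d ^ 2 * m ^ 2 * (r - t * v) ^ 2) /
      (4 * d ^ 4 * m ^ 2 + t ^ 2 * hbar ^ 2) : ℝ) : ℂ) +
  Complex.I *
      (((m * t * r ^ 2 * hbar ^ 2 - 4 * d ^ 4 * m ^ 3 * v * (t * v - 2 * r)) /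
        (8 * d ^ 4 * m ^ 2 * hbar + 2 * t ^ 2 * hbar ^ 3) : ℝ) : ℂ)

noncomputable def gPre (hbar m d : ℝ) (t : ℝ) : ℂ :=
  (((2 / Real.pi) ^ ((1 : ℝ) / 4) : ℝ) : ℂ) *
    (((d * m : ℝ) : ℂ) / ((2 * d ^ 2 * m : ℝ) + Complex.I * t * hbar)) ^ ((1 : ℂ) / 2)

lemma gaussPacket_eq (hbar m v d r t : ℝ) :
    gaussPacket hbar m v d r t = gPre hbar m d t * Complex.exp (gExp hbar m v d r t) := by
  rw [gaussPacket, gPre, gExp, Complex.exp_add]; ring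

lemma gaussPacket_ne_zero {hbar m d : ℝ} (hhbar : 0 < hbar) (hm : 0 < m) (hd : 0 < d)
    (v r t : ℝ) : gaussPacket hbar m v d r t ≠ 0 := by
  rw [gaussPacket_eq]
  apply mul_ne_zero _ (Complex.exp_ne_zero _)
  rw [gPre]
  apply mul_ne_zero
  · exact_mod_cast (Real.rpow_pos_of_pos (by positivity) _).ne'
  · rw [Ne, Complex.cpow_eq_zero_iff]
    rintro ⟨h, -⟩
    rw [div_eq_zero_iff] at h
    rcases h with h | h
    · exact (by positivity : (d * m : ℝ) ≠ 0) (by exact_mod_cast h)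
    · have := congrArg Complex.re h
      simp [Complex.add_re] at this
      rcases this with h1 | h1
      · rw [← Complex.ofReal_pow] at h1
        norm_cast at h1
        nlinarith
      · exact hm.ne' h1

/-- If the two packets have equal dissipation times (`m₁d₁² = m₂d₂²`), the two-particle
product wave function factorizes in center-of-mass and relative coordinates for all
times. -/
theorem gaussPacket_factorization
    {hbar m₁ m₂ d₁ d₂ : ℝ} (hhbar : 0 < hbar) (hm₁ : 0 < m₁) (hm₂ : 0 < m₂)
    (hd₁ : 0 < d₁) (hd₂ : 0 < d₂) (hdis : m₁ * d₁ ^ 2 = m₂ * d₂ ^ 2)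
    (v₁ v₂ : ℝ) :
    ∃ Φ φ : ℝ → ℝ → ℂ, ∀ x₁ x₂ t : ℝ,
      gaussPacket hbar m₁ v₁ d₁ x₁ t * gaussPacket hbar m₂ v₂ d₂ x₂ t =
        Φ ((m₁ * x₁ + m₂ * x₂) / (m₁ + m₂)) t * φ (x₁ - x₂) t := by
  refine ⟨fun X t => gaussPacket hbar m₁ v₁ d₁ X t * gaussPacket hbar m₂ v₂ d₂ X t,
    fun x t => gaussPacket hbar m₁ v₁ d₁ (m₂ * x / (m₁ + m₂)) t *
        gaussPacket hbar m₂ v₂ d₂ (-(m₁ * x) / (m₁ + m₂)) t /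
      (gaussPacket hbar m₁ v₁ d₁ 0 t * gaussPacket hbar m₂ v₂ d₂ 0 t), ?_⟩
  intro x₁ x₂ t
  have hne : gaussPacket hbar m₁ v₁ d₁ 0 t * gaussPacket hbar m₂ v₂ d₂ 0 t ≠ 0 :=
    mul_ne_zero (gaussPacket_ne_zero hhbar hm₁ hd₁ _ _ _)
      (gaussPacket_ne_zero hhbar hm₂ hd₂ _ _ _)
  rw [mul_div_assoc', eq_div_iff hne]
  set X := (m₁ * x₁ + m₂ * x₂) / (m₁ + m₂) with hX
  set u := m₂ * (x₁ - x₂) / (m₁ + m₂) with hu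
  set w := -(m₁ * (x₁ - x₂)) / (m₁ + m₂) with hw
  -- exponent identity
  have hM : m₁ + m₂ ≠ 0 := by positivity
  have hd2 : d₂ ^ 2 = m₁ * d₁ ^ 2 / m₂ := by field_simp; linarith [hdis]
  have hd4 : d₂ ^ 4 = (m₁ * d₁ ^ 2 / m₂) ^ 2 := by
    rw [← hd2]; ring
  have hDen1 : (4 * d₁ ^ 4 * m₁ ^ 2 + t ^ 2 * hbar ^ 2 : ℝ) ≠ 0 := by positivity
  have hDen2 : (4 * d₂ ^ 4 * m₂ ^ 2 + t ^ 2 * hbar ^ 2 : ℝ) ≠ 0 := by positivity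
  have hDen3 : (8 * d₁ ^ 4 * m₁ ^ 2 * hbar + 2 * t ^ 2 * hbar ^ 3 : ℝ) ≠ 0 := by positivity
  have hDen4 : (8 * d₂ ^ 4 * m₂ ^ 2 * hbar + 2 * t ^ 2 * hbar ^ 3 : ℝ) ≠ 0 := by positivity
  have hA : (-(d₁ ^ 2 * m₁ ^ 2 * (x₁ - t * v₁) ^ 2) / (4 * d₁ ^ 4 * m₁ ^ 2 + t ^ 2 * hbar ^ 2))
      + (-(d₂ ^ 2 * m₂ ^ 2 * (x₂ - t * v₂) ^ 2) / (4 * d₂ ^ 4 * m₂ ^ 2 + t ^ 2 * hbar ^ 2))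
      + (-(d₁ ^ 2 * m₁ ^ 2 * ((0:ℝ) - t * v₁) ^ 2) / (4 * d₁ ^ 4 * m₁ ^ 2 + t ^ 2 * hbar ^ 2))
      + (-(d₂ ^ 2 * m₂ ^ 2 * ((0:ℝ) - t * v₂) ^ 2) / (4 * d₂ ^ 4 * m₂ ^ 2 + t ^ 2 * hbar ^ 2))
      = (-(d₁ ^ 2 * m₁ ^ 2 * (X - t * v₁) ^ 2) / (4 * d₁ ^ 4 * m₁ ^ 2 + t ^ 2 * hbar ^ 2))
      + (-(d₂ ^ 2 * m₂ ^ 2 * (X - t * v₂) ^ 2) / (4 * d₂ ^ 4 * m₂ ^ 2 + t ^ 2 * hbar ^ 2))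
      + (-(d₁ ^ 2 * m₁ ^ 2 * (u - t * v₁) ^ 2) / (4 * d₁ ^ 4 * m₁ ^ 2 + t ^ 2 * hbar ^ 2))
      + (-(d₂ ^ 2 * m₂ ^ 2 * (w - t * v₂) ^ 2) / (4 * d₂ ^ 4 * m₂ ^ 2 + t ^ 2 * hbar ^ 2)) := by
    rw [hX, hu, hw, hd4, hd2] at *
    field_simp
    ring
  have hB : ((m₁ * t * x₁ ^ 2 * hbar ^ 2 - 4 * d₁ ^ 4 * m₁ ^ 3 * v₁ * (t * v₁ - 2 * x₁)) /
        (8 * d₁ ^ 4 * m₁ ^ 2 * hbar + 2 * t ^ 2 * hbar ^ 3))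
      + ((m₂ * t * x₂ ^ 2 * hbar ^ 2 - 4 * d₂ ^ 4 * m₂ ^ 3 * v₂ * (t * v₂ - 2 * x₂)) /
        (8 * d₂ ^ 4 * m₂ ^ 2 * hbar + 2 * t ^ 2 * hbar ^ 3))
      + ((m₁ * t * (0:ℝ) ^ 2 * hbar ^ 2 - 4 * d₁ ^ 4 * m₁ ^ 3 * v₁ * (t * v₁ - 2 * 0)) /
        (8 * d₁ ^ 4 * m₁ ^ 2 * hbar + 2 * t ^ 2 * hbar ^ 3))
      + ((m₂ * t * (0:ℝ) ^ 2 * hbar ^ 2 - 4 * d₂ ^ 4 * m₂ ^ 3 * v₂ * (t * v₂ - 2 * 0)) /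
        (8 * d₂ ^ 4 * m₂ ^ 2 * hbar + 2 * t ^ 2 * hbar ^ 3))
      = ((m₁ * t * X ^ 2 * hbar ^ 2 - 4 * d₁ ^ 4 * m₁ ^ 3 * v₁ * (t * v₁ - 2 * X)) /
        (8 * d₁ ^ 4 * m₁ ^ 2 * hbar + 2 * t ^ 2 * hbar ^ 3))
      + ((m₂ * t * X ^ 2 * hbar ^ 2 - 4 * d₂ ^ 4 * m₂ ^ 3 * v₂ * (t * v₂ - 2 * X)) /
        (8 * d₂ ^ 4 * m₂ ^ 2 * hbar + 2 * t ^ 2 * hbar ^ 3))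
      + ((m₁ * t * u ^ 2 * hbar ^ 2 - 4 * d₁ ^ 4 * m₁ ^ 3 * v₁ * (t * v₁ - 2 * u)) /
        (8 * d₁ ^ 4 * m₁ ^ 2 * hbar + 2 * t ^ 2 * hbar ^ 3))
      + ((m₂ * t * w ^ 2 * hbar ^ 2 - 4 * d₂ ^ 4 * m₂ ^ 3 * v₂ * (t * v₂ - 2 * w)) /
        (8 * d₂ ^ 4 * m₂ ^ 2 * hbar + 2 * t ^ 2 * hbar ^ 3)) := by
    rw [hX, hu, hw, hd4, hd2] at *
    field_simp
    ring
  have hE : gExp hbar m₁ v₁ d₁ x₁ t + gExp hbar m₂ v₂ d₂ x₂ t +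
      (gExp hbar m₁ v₁ d₁ 0 t + gExp hbar m₂ v₂ d₂ 0 t) =
      gExp hbar m₁ v₁ d₁ X t + gExp hbar m₂ v₂ d₂ X t +
      (gExp hbar m₁ v₁ d₁ u t + gExp hbar m₂ v₂ d₂ w t) := by
    simp only [gExp]
    have hA' := congrArg (fun x : ℝ => (x : ℂ)) hA
    have hB' := congrArg (fun x : ℝ => (x : ℂ)) hB
    push_cast at hA' hB' ⊢
    linear_combination hA' + Complex.I * hB'
  calc gaussPacket hbar m₁ v₁ d₁ x₁ t * gaussPacket hbar m₂ v₂ d₂ x₂ t *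
        (gaussPacket hbar m₁ v₁ d₁ 0 t * gaussPacket hbar m₂ v₂ d₂ 0 t)
      = gPre hbar m₁ d₁ t ^ 2 * gPre hbar m₂ d₂ t ^ 2 *
        Complex.exp (gExp hbar m₁ v₁ d₁ x₁ t + gExp hbar m₂ v₂ d₂ x₂ t +
          (gExp hbar m₁ v₁ d₁ 0 t + gExp hbar m₂ v₂ d₂ 0 t)) := by
        simp only [gaussPacket_eq, Complex.exp_add]; ring
    _ = gPre hbar m₁ d₁ t ^ 2 * gPre hbar m₂ d₂ t ^ 2 *
        Complex.exp (gExp hbar m₁ v₁ d₁ X t + gExp hbar m₂ v₂ d₂ X t +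
          (gExp hbar m₁ v₁ d₁ u t + gExp hbar m₂ v₂ d₂ w t)) := by rw [hE]
    _ = gaussPacket hbar m₁ v₁ d₁ X t * gaussPacket hbar m₂ v₂ d₂ X t *
        (gaussPacket hbar m₁ v₁ d₁ u t * gaussPacket hbar m₂ v₂ d₂ w t) := by
        simp only [gaussPacket_eq, Complex.exp_add]; ring
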